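/- arXiv:2001.01906 — 2 statements merged into one kernel-verified Lean document; each statement's English description precedes it below -/
import Mathlib

section
/- Let Ω be a finite set, let q : Ω → ℝ satisfy q(ω) ≥ 0 for all ω, let a : Ω → ℝ satisfy a(ω) > 0 for all ω, and let c ∈ ℝ. Then the set {(t,e) ∈ ℝ^Ω × ℝ^Ω : t(ω) ≥ 0 and e(ω) ≥ 0 for all ω, and c ≤ ∑_{ω∈Ω} q(ω)·φ_{a(ω)}(t(ω), e(ω))} is a convex subset of ℝ^Ω × ℝ^Ω. -/
/-- `φ_a(t,e) = t·log₂(1 + a·e/t)` for `t > 0`, extended by `0` for `t ≤ 0`. -/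
noncomputable def phi (a t e : ℝ) : ℝ :=
  if 0 < t then t * (Real.log (1 + a * e / t) / Real.log 2) else 0

/-!
`φ_a(t, e) = t · g(e / t)` is the perspective of `g(x) = log₂(1 + a x)`, closed by `0` at `t = 0`.
Being positively homogeneous, it is concave on the quadrant `t, e ≥ 0` as soon as it is
superadditive there. For `t₁, t₂ > 0` superadditivity is concavity of `g` with weights
`tᵢ / (t₁ + t₂)`; when `t₁ = 0` it reduces to `g(e₂/t₂) ≤ g((e₁ + e₂)/t₂)`, i.e. to `g` being
nondecreasing. A nonnegative combination of concave functions is concave, and superlevel sets of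
concave functions are convex.
-/

open Set Real

theorem ConcaveOn.fun_sum {𝕜 E β ι : Type*} [Semiring 𝕜] [PartialOrder 𝕜] [AddCommMonoid E]
    [SMul 𝕜 E] [AddCommMonoid β] [PartialOrder β] [IsOrderedAddMonoid β] [Module 𝕜 β]
    {s : Set E} (hs : Convex 𝕜 s) {t : Finset ι} {f : ι → E → β}
    (hf : ∀ i ∈ t, ConcaveOn 𝕜 s (f i)) : ConcaveOn 𝕜 s fun x => ∑ i ∈ t, f i x := by
  induction t using Finset.cons_induction with
  | empty => simpa using concaveOn_const (0 : β) hs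
  | cons i t _ ih =>
    simp only [Finset.sum_cons]
    exact (hf i (Finset.mem_cons_self i t)).add (ih fun j hj => hf j (Finset.mem_cons_of_mem hj))

theorem concaveOn_logb {b : ℝ} (hb : 1 ≤ b) : ConcaveOn ℝ (Ioi 0) (logb b) :=
  (strictConcaveOn_log_Ioi.concaveOn.smul (inv_nonneg.2 (log_nonneg hb))).congr
    fun x _ => by simp [logb, div_eq_inv_mul]

noncomputable def perspective (g : ℝ → ℝ) (t e : ℝ) : ℝ :=
  if 0 < t then t * g (e / t) else 0

namespace perspective

variable {g : ℝ → ℝ}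

@[simp] theorem zero_left (e : ℝ) : perspective g 0 e = 0 := by simp [perspective]

theorem of_pos {t : ℝ} (ht : 0 < t) (e : ℝ) : perspective g t e = t * g (e / t) := if_pos ht

theorem smul {s : ℝ} (hs : 0 ≤ s) (t e : ℝ) :
    perspective g (s * t) (s * e) = s * perspective g t e := by
  rcases hs.eq_or_lt with rfl | hs
  · simp
  by_cases ht : 0 < t
  · rw [of_pos (mul_pos hs ht), of_pos ht, mul_div_mul_left _ _ hs.ne', mul_assoc]
  · rw [perspective, perspective, if_neg ht, if_neg (by nlinarith), mul_zero]

theorem add_le_of_pos (hg : ConcaveOn ℝ (Ici 0) g) {t₁ t₂ e₁ e₂ : ℝ} (ht₁ : 0 < t₁)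
    (ht₂ : 0 < t₂) (he₁ : 0 ≤ e₁) (he₂ : 0 ≤ e₂) :
    perspective g t₁ e₁ + perspective g t₂ e₂ ≤ perspective g (t₁ + t₂) (e₁ + e₂) := by
  have ht : 0 < t₁ + t₂ := add_pos ht₁ ht₂
  have hsum : t₁ / (t₁ + t₂) + t₂ / (t₁ + t₂) = 1 := by field_simp
  have hmid : t₁ / (t₁ + t₂) * (e₁ / t₁) + t₂ / (t₁ + t₂) * (e₂ / t₂) = (e₁ + e₂) / (t₁ + t₂) := by
    field_simp
  have := hg.2 (mem_Ici.2 (div_nonneg he₁ ht₁.le)) (mem_Ici.2 (div_nonneg he₂ ht₂.le))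
    (div_nonneg ht₁.le ht.le) (div_nonneg ht₂.le ht.le) hsum
  simp only [smul_eq_mul, hmid] at this
  rw [of_pos ht₁, of_pos ht₂, of_pos ht]
  calc t₁ * g (e₁ / t₁) + t₂ * g (e₂ / t₂)
      = (t₁ + t₂) * (t₁ / (t₁ + t₂) * g (e₁ / t₁) + t₂ / (t₁ + t₂) * g (e₂ / t₂)) := by
        field_simp
    _ ≤ (t₁ + t₂) * g ((e₁ + e₂) / (t₁ + t₂)) := mul_le_mul_of_nonneg_left this ht.le

theorem add_le_of_zero_left (hg : MonotoneOn g (Ici 0)) {t e₁ e₂ : ℝ} (ht : 0 ≤ t)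
    (he₁ : 0 ≤ e₁) (he₂ : 0 ≤ e₂) :
    perspective g 0 e₁ + perspective g t e₂ ≤ perspective g t (e₁ + e₂) := by
  rcases ht.eq_or_lt with rfl | ht
  · simp
  rw [zero_left, zero_add, of_pos ht, of_pos ht]
  refine mul_le_mul_of_nonneg_left
    (hg (div_nonneg he₂ ht.le) (div_nonneg (by positivity) ht.le) ?_) ht.le
  gcongr
  linarith

theorem add_le (hg : ConcaveOn ℝ (Ici 0) g) (hg' : MonotoneOn g (Ici 0)) {t₁ t₂ e₁ e₂ : ℝ}
    (ht₁ : 0 ≤ t₁) (ht₂ : 0 ≤ t₂) (he₁ : 0 ≤ e₁) (he₂ : 0 ≤ e₂) :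
    perspective g t₁ e₁ + perspective g t₂ e₂ ≤ perspective g (t₁ + t₂) (e₁ + e₂) := by
  rcases ht₁.eq_or_lt with rfl | ht₁
  · simpa using add_le_of_zero_left hg' ht₂ he₁ he₂
  rcases ht₂.eq_or_lt with rfl | ht₂
  · simpa [add_comm e₁] using add_le_of_zero_left hg' ht₁.le he₂ he₁
  exact add_le_of_pos hg ht₁ ht₂ he₁ he₂

end perspective

open Function in
theorem concaveOn_perspective {g : ℝ → ℝ} (hg : ConcaveOn ℝ (Ici 0) g)
    (hg' : MonotoneOn g (Ici 0)) : ConcaveOn ℝ (Ici 0 ×ˢ Ici 0) (uncurry (perspective g)) := by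
  refine ⟨(convex_Ici 0).prod (convex_Ici 0), ?_⟩
  rintro ⟨t₁, e₁⟩ ⟨ht₁, he₁⟩ ⟨t₂, e₂⟩ ⟨ht₂, he₂⟩ u v hu hv -
  simp only [mem_Ici] at ht₁ he₁ ht₂ he₂
  simp only [uncurry_apply_pair, Prod.smul_mk, Prod.mk_add_mk, smul_eq_mul]
  rw [← perspective.smul hu, ← perspective.smul hv]
  exact perspective.add_le hg hg' (mul_nonneg hu ht₁) (mul_nonneg hv ht₂) (mul_nonneg hu he₁)
    (mul_nonneg hv he₂)

theorem phi_eq_perspective (a : ℝ) : phi a = perspective fun x => logb 2 (1 + a * x) := by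
  ext t e
  simp only [phi, perspective, logb, mul_div_assoc]

theorem concaveOn_logb_one_add_mul {a : ℝ} (ha : 0 ≤ a) :
    ConcaveOn ℝ (Ici 0) fun x => logb 2 (1 + a * x) := by
  refine (((concaveOn_logb one_le_two).comp_affineMap
    ((a • LinearMap.id : ℝ →ₗ[ℝ] ℝ).toAffineMap + AffineMap.const ℝ ℝ 1)).subset ?_
    (convex_Ici 0)).congr fun x _ => by simp [add_comm]
  intro x (hx : 0 ≤ x)
  simp only [mem_preimage, AffineMap.coe_add, Pi.add_apply, LinearMap.coe_toAffineMap,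
    LinearMap.smul_apply, LinearMap.id_apply, smul_eq_mul, AffineMap.const_apply, mem_Ioi]
  positivity

theorem monotoneOn_logb_one_add_mul {a : ℝ} (ha : 0 ≤ a) :
    MonotoneOn (fun x => logb 2 (1 + a * x)) (Ici 0) := fun x (hx : 0 ≤ x) y _ hxy =>
  logb_le_logb_of_le one_lt_two (by positivity) (by gcongr)

open Function in
theorem concaveOn_phi {a : ℝ} (ha : 0 ≤ a) : ConcaveOn ℝ (Ici 0 ×ˢ Ici 0) (uncurry (phi a)) := by
  rw [phi_eq_perspective]
  exact concaveOn_perspective (concaveOn_logb_one_add_mul ha) (monotoneOn_logb_one_add_mul ha)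

/-- For a finite set `Ω`, nonnegative weights `q`, positive
constants `a ω` and a real constant `c`, the set
`{(t,e) : t ≥ 0, e ≥ 0, c ≤ ∑_ω q ω · φ_{a ω}(t ω, e ω)}` is convex. -/
theorem stmt_5 {Ω : Type*} [Fintype Ω]
    (q : Ω → ℝ) (hq : ∀ ω, 0 ≤ q ω)
    (a : Ω → ℝ) (ha : ∀ ω, 0 < a ω) (c : ℝ) :
    Convex ℝ {te : (Ω → ℝ) × (Ω → ℝ) |
      (∀ ω, 0 ≤ te.1 ω) ∧ (∀ ω, 0 ≤ te.2 ω) ∧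
      c ≤ ∑ ω, q ω * phi (a ω) (te.1 ω) (te.2 ω)} := by
  have hterm (ω : Ω) : ConcaveOn ℝ (Ici 0) fun te : (Ω → ℝ) × (Ω → ℝ) =>
      q ω * phi (a ω) (te.1 ω) (te.2 ω) := by
    have h := (concaveOn_phi (ha ω).le).comp_linearMap
      ((LinearMap.proj (R := ℝ) (φ := fun _ : Ω => ℝ) ω).prodMap
        (LinearMap.proj (R := ℝ) (φ := fun _ : Ω => ℝ) ω))
    exact (h.subset (fun te (hte : 0 ≤ te) => ⟨hte.1 ω, hte.2 ω⟩) (convex_Ici 0)).smul (hq ω)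
  -- `0 ≤ te` in the product of pointwise orders is exactly the two sign conditions
  simp only [← and_assoc]
  exact (ConcaveOn.fun_sum (convex_Ici 0) fun ω _ => hterm ω).convex_ge c
end

section
/- The optimal value E* of Problem 1 equals the optimal value of Problem 2. Here Problem 1 has variables t, p : Ω × I × {1,…,L} → ℝ, feasible iff t ≥ 0, p ≥ 0, ∑_{S∈I} ∑_{l=1}^{L} t(ω,S,l) ≤ T for every ω, and for every S ∈ I and k ∈ S, N_S·D(r(k)) ≤ (B/T)·∑_ω q(ω)·t(ω,S,r(k))·log₂(1 + p(ω,S,r(k))·H(ω)(k)/n₀), with objective ∑_ω q(ω)·∑_{S∈I} ∑_{l=1}^{L} t(ω,S,l)·p(ω,S,l); and Problem 2 has variables t, e : Ω × I × {1,…,L} → ℝ, feasible iff t ≥ 0, e ≥ 0, ∑_{S∈I} ∑_{l=1}^{L} t(ω,S,l) ≤ T for every ω, and for every S ∈ I and k ∈ S, N_S·D(r(k)) ≤ (B/T)·∑_ω q(ω)·φ_{H(ω)(k)/n₀}(t(ω,S,r(k)), e(ω,S,r(k))), with objective ∑_ω q(ω)·∑_{S∈I} ∑_{l=1}^{L} e(ω,S,l).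 The infima of the two objectives over the respective feasible sets are equal (the change of variables being e = t·p). -/
/-- The optimal value `E*` of Problem 1 (energy minimization
without user transcoding, variables `(t,p)`) equals the optimal value of its
convex reformulation Problem 2 (variables `(t,e)`, change of variables
`e = t·p`): the infima of the two objectives over the respective feasible sets
coincide. -/
theorem stmt_7 {ι Ω : Type*} [Fintype ι] [Fintype Ω] [Nonempty Ω]
    (L : ℕ) (hL : 1 ≤ L)
    (D : Fin L → ℝ) (hDpos : ∀ l, 0 < D l) (hDmono : StrictMono D)
    (r : ι → Fin L)
    (q : Ω → ℝ) (hq : ∀ ω, 0 ≤ q ω) (hq1 : ∑ ω, q ω = 1)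
    (H : Ω → ι → ℝ) (hH : ∀ ω k, 0 < H ω k)
    (B T n₀ : ℝ) (hB : 0 < B) (hT : 0 < T) (hn₀ : 0 < n₀)
    (I : Finset (Finset ι)) (hI : ∀ S ∈ I, S.Nonempty)
    (N : Finset ι → ℕ) (hN : ∀ S ∈ I, 0 < N S) :
    sInf ((fun tp : (Ω → Finset ι → Fin L → ℝ) × (Ω → Finset ι → Fin L → ℝ) =>
        ∑ ω, q ω * ∑ S ∈ I, ∑ l, tp.1 ω S l * tp.2 ω S l) ''
      {tp | (∀ ω S l, 0 ≤ tp.1 ω S l) ∧ (∀ ω S l, 0 ≤ tp.2 ω S l) ∧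
        (∀ ω, ∑ S ∈ I, ∑ l, tp.1 ω S l ≤ T) ∧
        (∀ S ∈ I, ∀ k ∈ S, (N S : ℝ) * D (r k) ≤
          (B / T) * ∑ ω, q ω * (tp.1 ω S (r k) *
            (Real.log (1 + tp.2 ω S (r k) * H ω k / n₀) / Real.log 2)))}) =
    sInf ((fun te : (Ω → Finset ι → Fin L → ℝ) × (Ω → Finset ι → Fin L → ℝ) =>
        ∑ ω, q ω * ∑ S ∈ I, ∑ l, te.2 ω S l) ''
      {te | (∀ ω S l, 0 ≤ te.1 ω S l) ∧ (∀ ω S l, 0 ≤ te.2 ω S l) ∧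
        (∀ ω, ∑ S ∈ I, ∑ l, te.1 ω S l ≤ T) ∧
        (∀ S ∈ I, ∀ k ∈ S, (N S : ℝ) * D (r k) ≤
          (B / T) * ∑ ω, q ω *
            phi (H ω k / n₀) (te.1 ω S (r k)) (te.2 ω S (r k)))}) := by
  apply csInf_eq_csInf_of_forall_exists_le
  · -- from a Problem 1 point, build a Problem 2 point with equal value
    rintro x ⟨⟨t, p⟩, ⟨ht0, hp0, hTc, hcon⟩, rfl⟩
    refine ⟨_, ⟨((fun ω S l => t ω S l), (fun ω S l => t ω S l * p ω S l)),
      ⟨ht0, fun ω S l => mul_nonneg (ht0 ω S l) (hp0 ω S l), hTc, ?_⟩, rfl⟩, le_rfl⟩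
    intro S hS k hk
    refine le_trans (hcon S hS k hk) (le_of_eq ?_)
    congr 1
    refine Finset.sum_congr rfl fun ω _ => ?_
    congr 1
    unfold phi
    rcases lt_or_ge 0 (t ω S (r k)) with h | h
    · rw [if_pos h]
      have hne : t ω S (r k) ≠ 0 := ne_of_gt h
      congr 3
      field_simp
    · have : t ω S (r k) = 0 := le_antisymm h (ht0 ω S (r k))
      rw [if_neg (not_lt.mpr h)]
      simp [this]
  · -- from a Problem 2 point, build a Problem 1 point with value ≤
    rintro x ⟨⟨t, e⟩, ⟨ht0, he0, hTc, hcon⟩, rfl⟩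
    refine ⟨_, ⟨(fun ω S l => t ω S l,
      fun ω S l => if 0 < t ω S l then e ω S l / t ω S l else 0),
      ⟨ht0, ?_, hTc, ?_⟩, rfl⟩, ?_⟩
    · intro ω S l
      dsimp only
      split_ifs with h
      · exact div_nonneg (he0 ω S l) h.le
      · exact le_rfl
    · intro S hS k hk
      refine le_trans (hcon S hS k hk) (le_of_eq ?_)
      congr 1
      refine Finset.sum_congr rfl fun ω _ => ?_
      congr 1
      unfold phi
      rcases lt_or_ge 0 (t ω S (r k)) with h | h
      · rw [if_pos h]
        dsimp only
        rw [if_pos h]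
        have hne : t ω S (r k) ≠ 0 := ne_of_gt h
        congr 3
        field_simp
      · have h0 : t ω S (r k) = 0 := le_antisymm h (ht0 ω S (r k))
        rw [if_neg (not_lt.mpr h)]
        simp [h0]
    · dsimp only
      refine Finset.sum_le_sum fun ω _ => mul_le_mul_of_nonneg_left
        (Finset.sum_le_sum fun S _ => Finset.sum_le_sum fun l _ => ?_) (hq ω)
      split_ifs with h
      · rw [mul_div_cancel₀ _ (ne_of_gt h)]
      · have h0 : t ω S l = 0 := le_antisymm (not_lt.mp h) (ht0 ω S l)
        rw [h0, zero_mul]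
        exact he0 ω S l
end
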